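/- An Eilenberg–Moore algebra for the ω-ideal monad D on pointed posets is exactly an ω-complete pointed poset: a pointed poset X admits a structure map β : DX → X satisfying the Eilenberg–Moore laws if and only if every countable directed subset of X has a supremum, and in that case β necessarily sends each ω-ideal to its supremum. -/

import Mathlib

/-- `S` is an ω-ideal relative to the ambient set `U`:
`S ⊆ U` and `S` is the down-closure inside `U` of a countable
nonempty directed set `C ⊆ S`. -/
def IsOmegaIdealIn {α : Type*} [Preorder α] (U : Set α) (S : Set α) : Prop :=
  S ⊆ U ∧ ∃ C : Set α, C ⊆ S ∧ C.Countable ∧ C.Nonempty ∧ DirectedOn (· ≤ ·) C ∧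
    S = {x ∈ U | ∃ c ∈ C, x ≤ c}

/-- `S` is an ω-ideal of `α` (an element of `DX` for `X = α`). -/
def IsOmegaIdeal {α : Type*} [Preorder α] (S : Set α) : Prop :=
  IsOmegaIdealIn Set.univ S

/-- An element of `D²X`: an ω-ideal (w.r.t. inclusion) of the poset `DX`
of ω-ideals of `X`. -/
def IsOmegaIdeal₂ {α : Type*} [Preorder α] (𝒜 : Set (Set α)) : Prop :=
  IsOmegaIdealIn {I : Set α | IsOmegaIdeal I} 𝒜

/-- An element of `D³X`. -/
def IsOmegaIdeal₃ {α : Type*} [Preorder α] (ℬ : Set (Set (Set α))) : Prop :=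
  IsOmegaIdealIn {𝒜 : Set (Set α) | IsOmegaIdeal₂ 𝒜} ℬ

/-- The principal ideal `↓{a}`, i.e. `η^D_X(a)`. -/
def principalIdeal {α : Type*} [Preorder α] (a : α) : Set α := {x | x ≤ a}

/-- An Eilenberg–Moore structure map `β : DX → X` for the ω-ideal monad `D`
(recorded as a function on sets, constrained on ω-ideals): it is a morphism of
pointed posets, `β ∘ η^D_X = id`, and `β ∘ Dβ = β ∘ μ^D_X` (where
`Dβ(𝒜) = ↓(β '' 𝒜) = {x | ∃ I ∈ 𝒜, x ≤ β I}` and `μ^D_X(𝒜) = ⋃𝒜`). -/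
def IsEMStructure {X : Type*} [PartialOrder X] [OrderBot X] (β : Set X → X) : Prop :=
  (∀ I J : Set X, IsOmegaIdeal I → IsOmegaIdeal J → I ⊆ J → β I ≤ β J) ∧
  (∀ a : X, β (principalIdeal a) = a) ∧
  (∀ 𝒜 : Set (Set X), IsOmegaIdeal₂ 𝒜 →
    β {x | ∃ I ∈ 𝒜, x ≤ β I} = β (⋃₀ 𝒜))

/-!
A structure map `β` is monotone and fixes principal ideals, so for an ω-ideal `I` it lies above
every `x ∈ I` (as `↓x ⊆ I`) and below every upper bound `u` of `I` (as `I ⊆ ↓u`): `β I = sup I`.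
Applied to the ω-ideal generated by a countable directed set, this gives ω-completeness.
Conversely, on an ω-complete poset let `β` choose a least upper bound. For the multiplication
law, both `↓(β '' 𝒜)` and `⋃₀ 𝒜` have exactly the upper bounds of `β '' 𝒜`, and a choice of
least upper bound only sees the set of upper bounds.
-/

section OmegaIdeal
variable {α : Type*} [Preorder α]

theorem isOmegaIdeal_iff {I : Set α} :
    IsOmegaIdeal I ↔ ∃ C : Set α, C.Countable ∧ C.Nonempty ∧ DirectedOn (· ≤ ·) C ∧
      I = lowerClosure C := by
  have hsep (C : Set α) : {x ∈ Set.univ | ∃ c ∈ C, x ≤ c} = lowerClosure C := by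
    ext; simp
  simp only [IsOmegaIdeal, IsOmegaIdealIn, hsep, Set.subset_univ, true_and]
  constructor
  · rintro ⟨C, -, hC⟩
    exact ⟨C, hC⟩
  · rintro ⟨C, hC, hne, hdir, rfl⟩
    exact ⟨C, subset_lowerClosure, hC, hne, hdir, rfl⟩

theorem isOmegaIdeal_lowerClosure {C : Set α} (hC : C.Countable) (hne : C.Nonempty)
    (hdir : DirectedOn (· ≤ ·) C) : IsOmegaIdeal (lowerClosure C : Set α) :=
  isOmegaIdeal_iff.2 ⟨C, hC, hne, hdir, rfl⟩

theorem isOmegaIdeal_principalIdeal (a : α) : IsOmegaIdeal (principalIdeal a) := by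
  have h := isOmegaIdeal_lowerClosure (Set.countable_singleton a) (Set.singleton_nonempty a)
    (directedOn_singleton a)
  rwa [lowerClosure_singleton, LowerSet.coe_Iic] at h

theorem IsOmegaIdeal.isLowerSet {I : Set α} (hI : IsOmegaIdeal I) : IsLowerSet I := by
  obtain ⟨C, -, -, -, rfl⟩ := isOmegaIdeal_iff.1 hI
  exact (lowerClosure C).lower

end OmegaIdeal

theorem IsEMStructure.isLUB {X : Type*} [PartialOrder X] [OrderBot X] {β : Set X → X}
    (hβ : IsEMStructure β) {I : Set X} (hI : IsOmegaIdeal I) : IsLUB I (β I) := by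
  obtain ⟨hmono, hunit, -⟩ := hβ
  refine ⟨fun x hx => ?_, fun u hu => ?_⟩
  · exact (hunit x).symm.trans_le
      (hmono _ _ (isOmegaIdeal_principalIdeal x) hI (hI.isLowerSet.Iic_subset hx))
  · exact (hmono _ _ hI (isOmegaIdeal_principalIdeal u) hu).trans_eq (hunit u)

def IsOmegaComplete (X : Type*) [PartialOrder X] : Prop :=
  ∀ S : Set X, S.Countable → S.Nonempty → DirectedOn (· ≤ ·) S → ∃ b, IsLUB S b

theorem IsOmegaComplete.exists_isLUB {X : Type*} [PartialOrder X] (hX : IsOmegaComplete X)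
    {I : Set X} (hI : IsOmegaIdeal I) : ∃ b, IsLUB I b := by
  obtain ⟨C, hC, hne, hdir, rfl⟩ := isOmegaIdeal_iff.1 hI
  obtain ⟨b, hb⟩ := hX C hC hne hdir
  exact ⟨b, by rwa [IsLUB, upperBounds_lowerClosure]⟩

section OmegaSup
variable {X : Type*} [PartialOrder X] [Nonempty X]

noncomputable def omegaSup (S : Set X) : X :=
  Classical.epsilon (IsLUB S)

theorem isLUB_omegaSup {S : Set X} (h : ∃ b, IsLUB S b) : IsLUB S (omegaSup S) :=
  Classical.epsilon_spec h

theorem omegaSup_congr {S T : Set X} (h : upperBounds S = upperBounds T) :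
    omegaSup S = omegaSup T := by
  simp only [omegaSup, IsLUB, h]

end OmegaSup

section UpperBounds
variable {X ι : Type*} [Preorder X]

theorem upperBounds_setOf_exists_le (𝒜 : Set ι) (f : ι → X) :
    upperBounds {x | ∃ I ∈ 𝒜, x ≤ f I} = upperBounds (f '' 𝒜) := by
  rw [← upperBounds_lowerClosure (s := f '' 𝒜)]
  congr 1
  ext x
  simp [mem_lowerClosure]

theorem upperBounds_sUnion_of_isLUB {𝒜 : Set (Set X)} {f : Set X → X}
    (h : ∀ I ∈ 𝒜, IsLUB I (f I)) : upperBounds (⋃₀ 𝒜) = upperBounds (f '' 𝒜) := by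
  ext u
  simp only [Set.sUnion_eq_biUnion, upperBounds_iUnion, Set.mem_iInter,
    Set.forall_mem_image, mem_upperBounds]
  exact forall₂_congr fun I hI => (isLUB_le_iff (h I hI)).symm

end UpperBounds

theorem IsOmegaComplete.isEMStructure_omegaSup {X : Type*} [PartialOrder X] [OrderBot X]
    (hX : IsOmegaComplete X) : IsEMStructure (omegaSup (X := X)) := by
  have hsup {I : Set X} (hI : IsOmegaIdeal I) : IsLUB I (omegaSup I) :=
    isLUB_omegaSup (hX.exists_isLUB hI)
  refine ⟨fun I J hI hJ hIJ => (hsup hI).mono (hsup hJ) hIJ,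
    fun a => (isLUB_omegaSup ⟨a, isLUB_Iic⟩).unique isLUB_Iic, fun 𝒜 h𝒜 => ?_⟩
  apply omegaSup_congr
  rw [upperBounds_setOf_exists_le,
    upperBounds_sUnion_of_isLUB fun I hI => hsup (h𝒜.1 hI)]

theorem IsEMStructure.isOmegaComplete {X : Type*} [PartialOrder X] [OrderBot X]
    {β : Set X → X} (hβ : IsEMStructure β) : IsOmegaComplete X := fun S hS hne hdir =>
  ⟨β (lowerClosure S), by
    simpa only [IsLUB, upperBounds_lowerClosure] using
      hβ.isLUB (isOmegaIdeal_lowerClosure hS hne hdir)⟩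

/-- An Eilenberg–Moore algebra for the ω-ideal monad `D` on
pointed posets is exactly an ω-complete pointed poset: a structure map
satisfying the Eilenberg–Moore laws exists iff every countable (nonempty)
directed subset has a supremum, and any such structure map necessarily sends
each ω-ideal to its supremum. -/
theorem stmt_9 (X : Type*) [PartialOrder X] [OrderBot X] :
    ((∃ β : Set X → X, IsEMStructure β) ↔
      (∀ S : Set X, S.Countable → S.Nonempty → DirectedOn (· ≤ ·) S →
        ∃ b, IsLUB S b)) ∧
    (∀ β : Set X → X, IsEMStructure β →
      ∀ I : Set X, IsOmegaIdeal I → IsLUB I (β I)) :=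
  ⟨⟨fun ⟨_, hβ⟩ => hβ.isOmegaComplete,
      fun hX => ⟨omegaSup, IsOmegaComplete.isEMStructure_omegaSup hX⟩⟩,
    fun _ hβ _ hI => hβ.isLUB hI⟩
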